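/- arXiv:2206.01091 — 3 statements merged into one kernel-verified Lean document; each statement's English description precedes it below -/
import Mathlib

section
/- For A = diag(a₁, a₂) and B = diag(b₁, b₂) invertible real 2×2 diagonal matrices, the double integral over O(2) × O(2) of det(Id − u (ψ₂ B) ⊗ (ψ₁ A)⁻ᵀ) dψ₂ dψ₁ (normalized Haar measures) equals 1 + (b₁² b₂²)/(a₁² a₂²) u⁴. -/
/-!
Expanding the `4 × 4` determinant, `det (1 - u • M ⊗ₖ P)` is a polynomial in `u` whose
coefficients are polynomials in `tr M, det M, tr P, det P`. For `M = ψ₂ * B` with `ψ₂` Haar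
distributed on `O(2)`, the terms odd in `tr M` integrate to zero by invariance under `ψ₂ ↦ -ψ₂`
(which fixes `det ψ₂`), and the terms linear in `det ψ₂` by invariance under a reflection. What
survives is `1 + u⁴ (det B det P)² + u² det P · ∫ tr (ψ₂ B)²`. Finally `det P = det ψ₁ / det A`, so
the same reflection argument in `ψ₁` kills the last term.
-/

open Matrix MeasureTheory

namespace Matrix

theorem det_one_sub_smul_kronecker_fin_two {R : Type*} [CommRing R] (u : R)
    (M P : Matrix (Fin 2) (Fin 2) R) :
    (1 - u • kroneckerMap (· * ·) M P).det
      = 1 - u * (M.trace * P.trace)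
        + u ^ 2 * (M.trace ^ 2 * P.det + M.det * P.trace ^ 2 - 2 * (M.det * P.det))
        - u ^ 3 * (M.det * P.det * M.trace * P.trace) + u ^ 4 * (M.det ^ 2 * P.det ^ 2) := by
  have h0 : finProdFinEquiv.symm (0 : Fin 4) = ((0, 0) : Fin 2 × Fin 2) := rfl
  have h1 : finProdFinEquiv.symm (1 : Fin 4) = ((0, 1) : Fin 2 × Fin 2) := rfl
  have h2 : finProdFinEquiv.symm (2 : Fin 4) = ((1, 0) : Fin 2 × Fin 2) := rfl
  have h3 : finProdFinEquiv.symm (3 : Fin 4) = ((1, 1) : Fin 2 × Fin 2) := rfl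
  rw [← det_reindex_self finProdFinEquiv]
  simp only [det_succ_row_zero, Fin.sum_univ_succ]
  simp [Fin.succAbove, trace_fin_two, h0, h1, h2, h3]
  ring

section UnitaryGroup

variable {n 𝕜 : Type*} [Fintype n] [DecidableEq n] [RCLike 𝕜]

theorem isCompact_unitaryGroup : IsCompact (unitaryGroup n 𝕜 : Set (Matrix n n 𝕜)) := by
  refine (isCompact_closedBall (0 : 𝕜) 1).matrix.of_isClosed_subset ?_ fun U hU i j => ?_
  · exact (isClosed_eq (by fun_prop) continuous_const).inter
      (isClosed_eq (by fun_prop) continuous_const)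
  · simpa using entry_norm_bound_of_unitary hU i j

instance : CompactSpace (unitaryGroup n 𝕜) :=
  isCompact_iff_compactSpace.mp isCompact_unitaryGroup

theorem det_sq_of_mem_orthogonalGroup {A : Matrix n n ℝ} (hA : A ∈ orthogonalGroup n ℝ) :
    A.det ^ 2 = 1 := by
  simpa [sq] using Unitary.star_mul_self_of_mem (det_of_mem_unitary hA)

end UnitaryGroup

namespace orthogonalGroup

section Integrals

variable {n : Type*} [Fintype n] [DecidableEq n]
  [MeasurableSpace (orthogonalGroup n ℝ)] [BorelSpace (orthogonalGroup n ℝ)]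
  (ν : Measure (orthogonalGroup n ℝ)) [ν.IsMulLeftInvariant]

theorem integral_comp_det_mul_trace_mul_eq_zero (hn : Even (Fintype.card n)) (g : ℝ → ℝ)
    (B : Matrix n n ℝ) :
    ∫ ψ, g (ψ : Matrix n n ℝ).det * ((ψ : Matrix n n ℝ) * B).trace ∂ν = 0 :=
  integral_eq_zero_of_mul_left_eq_neg (g := -1) fun ψ => by
    simp [Unitary.coe_neg, det_neg, hn.neg_one_pow]

theorem integral_det_eq_zero [Nonempty n] : ∫ ψ, (ψ : Matrix n n ℝ).det ∂ν = 0 := by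
  obtain ⟨i⟩ := ‹Nonempty n›
  let d : n → ℝ := Function.update 1 i (-1)
  refine integral_eq_zero_of_mul_left_eq_neg (g := ⟨diagonal d, ?_⟩) fun ψ => ?_
  · rw [mem_unitaryGroup_iff', star_eq_conjTranspose, diagonal_conjTranspose,
      diagonal_mul_diagonal, ← diagonal_one]
    congr 1
    ext j
    rcases eq_or_ne j i with rfl | h <;> simp [d, *]
  · simp [det_mul, d, Finset.prod_update_of_mem]

end Integrals

section FinTwo

local notation "O₂" => orthogonalGroup (Fin 2) ℝ

variable [MeasurableSpace O₂] [BorelSpace O₂] (ν : Measure O₂) [IsProbabilityMeasure ν]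
  [ν.IsMulLeftInvariant]

theorem integral_det_one_sub_smul_kronecker_mul (u : ℝ) (B P : Matrix (Fin 2) (Fin 2) ℝ) :
    ∫ ψ : O₂, (1 - u • kroneckerMap (· * ·) ((ψ : Matrix (Fin 2) (Fin 2) ℝ) * B) P).det ∂ν
      = 1 + u ^ 4 * (B.det ^ 2 * P.det ^ 2)
        + u ^ 2 * P.det * ∫ ψ : O₂, ((ψ : Matrix (Fin 2) (Fin 2) ℝ) * B).trace ^ 2 ∂ν := by
  have hintegrable (f : O₂ → ℝ) (hf : Continuous f) : Integrable f ν :=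
    hf.integrable_of_hasCompactSupport (.of_compactSpace f)
  set t : O₂ → ℝ := fun ψ => ((ψ : Matrix (Fin 2) (Fin 2) ℝ) * B).trace
  set e : O₂ → ℝ := fun ψ => (ψ : Matrix (Fin 2) (Fin 2) ℝ).det
  have hpointwise (ψ : O₂) :
      (1 - u • kroneckerMap (· * ·) ((ψ : Matrix (Fin 2) (Fin 2) ℝ) * B) P).det
      = 1 + u ^ 4 * (B.det ^ 2 * P.det ^ 2) + u ^ 2 * P.det * t ψ ^ 2
        + (-u * P.trace - u ^ 3 * B.det * P.det * P.trace * e ψ) * t ψ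
        + u ^ 2 * B.det * (P.trace ^ 2 - 2 * P.det) * e ψ := by
    rw [det_one_sub_smul_kronecker_fin_two, det_mul]
    linear_combination (u ^ 4 * B.det ^ 2 * P.det ^ 2) * det_sq_of_mem_orthogonalGroup ψ.2
  have hodd : ∫ ψ, (-u * P.trace - u ^ 3 * B.det * P.det * P.trace * e ψ) * t ψ ∂ν = 0 :=
    integral_comp_det_mul_trace_mul_eq_zero ν even_two
      (fun d => -u * P.trace - u ^ 3 * B.det * P.det * P.trace * d) B
  simp_rw [hpointwise]
  rw [integral_add, integral_add, integral_add, integral_const, integral_const_mul,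
    integral_const_mul, hodd, integral_det_eq_zero]
  · simp [t]
  all_goals exact hintegrable _ (by fun_prop)

theorem integral_integral_det_one_sub_smul_kronecker_mul_inv_transpose (u : ℝ)
    (A B : Matrix (Fin 2) (Fin 2) ℝ) :
    ∫ ψ₁ : O₂, ∫ ψ₂ : O₂, (1 - u • kroneckerMap (· * ·) ((ψ₂ : Matrix (Fin 2) (Fin 2) ℝ) * B)
      (((ψ₁ : Matrix (Fin 2) (Fin 2) ℝ) * A)⁻¹)ᵀ).det ∂ν ∂ν
      = 1 + u ^ 4 * (B.det ^ 2 / A.det ^ 2) := by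
  have hpointwise (K : ℝ) (ψ : O₂) :
      1 + u ^ 4 * (B.det ^ 2 * (((ψ : Matrix (Fin 2) (Fin 2) ℝ) * A)⁻¹)ᵀ.det ^ 2)
        + u ^ 2 * (((ψ : Matrix (Fin 2) (Fin 2) ℝ) * A)⁻¹)ᵀ.det * K
      = 1 + u ^ 4 * (B.det ^ 2 / A.det ^ 2)
        + u ^ 2 * A.det⁻¹ * K * (ψ : Matrix (Fin 2) (Fin 2) ℝ).det := by
    have hψ := det_sq_of_mem_orthogonalGroup ψ.2
    have hinv : (ψ : Matrix (Fin 2) (Fin 2) ℝ).det⁻¹ = (ψ : Matrix (Fin 2) (Fin 2) ℝ).det :=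
      inv_eq_of_mul_eq_one_right (by rw [← sq, hψ])
    rw [det_transpose, det_nonsing_inv, Ring.inverse_eq_inv', det_mul, mul_inv, hinv]
    linear_combination u ^ 4 * B.det ^ 2 * A.det⁻¹ ^ 2 * hψ
  simp_rw [integral_det_one_sub_smul_kronecker_mul, hpointwise]
  rw [integral_add (integrable_const _), integral_const, integral_const_mul, integral_det_eq_zero]
  · simp
  · exact (continuous_const.mul (by fun_prop)).integrable_of_hasCompactSupport (.of_compactSpace _)

end FinTwo

end orthogonalGroup

end Matrix

theorem double_integral_O2_characteristic_polynomial_general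
    (a₁ a₂ b₁ b₂ : ℝ)
    [MeasurableSpace (Matrix.orthogonalGroup (Fin 2) ℝ)]
    [BorelSpace (Matrix.orthogonalGroup (Fin 2) ℝ)]
    (ν : Measure (Matrix.orthogonalGroup (Fin 2) ℝ)) [IsProbabilityMeasure ν]
    (hinv : ∀ U : Matrix.orthogonalGroup (Fin 2) ℝ, ν.map (fun V => U * V) = ν)
    (u : ℝ) :
    (∫ ψ₁ : Matrix.orthogonalGroup (Fin 2) ℝ,
        ∫ ψ₂ : Matrix.orthogonalGroup (Fin 2) ℝ,
          ((1 : Matrix (Fin 2 × Fin 2) (Fin 2 × Fin 2) ℝ)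
              - u • Matrix.kroneckerMap (· * ·)
                  ((ψ₂ : Matrix (Fin 2) (Fin 2) ℝ) * Matrix.diagonal ![b₁, b₂])
                  ((((ψ₁ : Matrix (Fin 2) (Fin 2) ℝ) * Matrix.diagonal ![a₁, a₂])⁻¹)ᵀ)).det
          ∂ν ∂ν)
      = 1 + (b₁ ^ 2 * b₂ ^ 2) / (a₁ ^ 2 * a₂ ^ 2) * u ^ 4 := by
  have : ν.IsMulLeftInvariant := ⟨hinv⟩
  rw [orthogonalGroup.integral_integral_det_one_sub_smul_kronecker_mul_inv_transpose]
  simp only [det_diagonal, Fin.prod_univ_two, cons_val_zero, cons_val_one]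
  ring

/-- for invertible diagonal matrices `A = diag(a₁,a₂)` and
`B = diag(b₁,b₂)`, the double integral over `O(2) × O(2)` (normalized Haar
measures) of `det (Id - u (ψ₂ B) ⊗ ᵀ((ψ₁ A)⁻¹))` equals
`1 + (b₁² b₂²)/(a₁² a₂²) u⁴`. -/
theorem double_integral_O2_characteristic_polynomial
    (a₁ a₂ b₁ b₂ : ℝ) (ha₁ : a₁ ≠ 0) (ha₂ : a₂ ≠ 0) (hb₁ : b₁ ≠ 0) (hb₂ : b₂ ≠ 0)
    [MeasurableSpace (Matrix.orthogonalGroup (Fin 2) ℝ)]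
    [BorelSpace (Matrix.orthogonalGroup (Fin 2) ℝ)]
    (ν : Measure (Matrix.orthogonalGroup (Fin 2) ℝ)) [IsProbabilityMeasure ν]
    (hinv : ∀ U : Matrix.orthogonalGroup (Fin 2) ℝ, ν.map (fun V => U * V) = ν)
    (u : ℝ) :
    (∫ ψ₁ : Matrix.orthogonalGroup (Fin 2) ℝ,
        ∫ ψ₂ : Matrix.orthogonalGroup (Fin 2) ℝ,
          ((1 : Matrix (Fin 2 × Fin 2) (Fin 2 × Fin 2) ℝ)
              - u • Matrix.kroneckerMap (· * ·)
                  ((ψ₂ : Matrix (Fin 2) (Fin 2) ℝ) * Matrix.diagonal ![b₁, b₂])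
                  ((((ψ₁ : Matrix (Fin 2) (Fin 2) ℝ) * Matrix.diagonal ![a₁, a₂])⁻¹)ᵀ)).det
          ∂ν ∂ν)
      = 1 + (b₁ ^ 2 * b₂ ^ 2) / (a₁ ^ 2 * a₂ ^ 2) * u ^ 4 :=
  double_integral_O2_characteristic_polynomial_general a₁ a₂ b₁ b₂ ν hinv u
end

section
/- Let B = diag(b₁,b₂,b₃,b₄) ∈ GL_4(ℝ) and consider the GL_4-representation ρ_{(2,2)} (Schur functor for partition (2,2) applied to ℝ⁴). The vector v = Σ_{1≤i<j≤4} (e_i ∧ e_j)² in Sym²(Λ²ℝ⁴) maps to an O(4)-fixed vector in S_{(2,2)}(ℝ⁴), and the action of ρ_{(2,2)}(B) on the line spanned by (the image of) v has trace-component Σ_{1≤i<j≤4} b_i² b_j²; i.e., the diagonal matrix coefficient of ρ_{(2,2)}(B) at the normalized spherical vector equals (Σ_{i<j} b_i² b_j²)/6. -/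
open Matrix MeasureTheory

noncomputable section

/-- `(-1)^d` times the elementary symmetric function `e_d` of the eigenvalues of
`X`, read off from the characteristic polynomial of `X`. -/
def eFromCharpoly (N : ℕ) (X : Matrix (Fin N) (Fin N) ℝ) (d : ℤ) : ℝ :=
  if 0 ≤ d ∧ d ≤ (N : ℤ) then (-1 : ℝ) ^ d.toNat * X.charpoly.coeff (N - d.toNat) else 0

/-- Conjugate partition of a partition given as a list of parts. -/
def conjList (l : List ℕ) : List ℕ :=
  (List.range (l.foldr max 0)).map fun i => (l.filter (fun a => i < a)).length

/-- The character `tr ρ_l(X)` of the irreducible polynomial representation of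
`GL_N(ℝ)` attached to the partition `l` (parts listed decreasingly): the Schur
polynomial `s_l` of the eigenvalues of `X`, given via the dual Jacobi–Trudi
determinant in the elementary symmetric functions of the eigenvalues. -/
def glChar (N : ℕ) (l : List ℕ) (X : Matrix (Fin N) (Fin N) ℝ) : ℝ :=
  Matrix.det (Matrix.of fun i j : Fin (conjList l).length =>
    eFromCharpoly N X (((conjList l).get i : ℤ) + (j : ℤ) - (i : ℤ)))

end


/-!
The character of `ρ_{(2,2)}` is the Schur polynomial `s_{(2,2)} = e₂² - e₁e₃`, and the
elementary symmetric function `e_k` of `ψB` is `∑_{|S| = k} b^S det ψ_{SS}`. Changing the sign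
of a row `r` of `ψ` preserves the Haar measure and negates `det ψ_{SS} · det ψ_{TT}` whenever
`r ∈ S ∆ T`, so only the terms `S = T` survive integration. For `|S| = 2`, permuting rows
shows that `∫ (det ψ_{RS})²` does not depend on the row pair `R`, while Lagrange's identity for
the two orthonormal columns indexed by `S` says that these squared minors sum to `1` over all
`R`; hence each integral is `1 / (N choose 2)`, which is `1/6` for `N = 4`.
-/

namespace Matrix

variable {ι R : Type*} [DecidableEq ι] [CommRing R]

def principalMinor (M : Matrix ι ι R) (s : Finset ι) : R :=
  (M.submatrix ((↑) : s → ι) (↑)).det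

def sumPrincipalMinors [Fintype ι] (M : Matrix ι ι R) (k : ℕ) : R :=
  ∑ s ∈ Finset.univ.powersetCard k, M.principalMinor s

theorem principalMinor_diagonal_mul [Fintype ι] (d : ι → R) (M : Matrix ι ι R) (s : Finset ι) :
    (diagonal d * M).principalMinor s = (∏ i ∈ s, d i) * M.principalMinor s := by
  have : (diagonal d * M).submatrix ((↑) : s → ι) (↑) =
      diagonal (fun i : s => d i) * M.submatrix (↑) (↑) := by
    ext i j
    simp [diagonal_mul]
  rw [principalMinor, this, det_mul, det_diagonal, Finset.prod_coe_sort, principalMinor]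

theorem principalMinor_mul_diagonal [Fintype ι] (M : Matrix ι ι R) (d : ι → R) (s : Finset ι) :
    (M * diagonal d).principalMinor s = (∏ i ∈ s, d i) * M.principalMinor s := by
  have : (M * diagonal d).submatrix ((↑) : s → ι) (↑) =
      M.submatrix (↑) (↑) * diagonal (fun i : s => d i) := by
    ext i j
    simp [mul_diagonal]
  rw [principalMinor, this, det_mul, det_diagonal, Finset.prod_coe_sort, principalMinor, mul_comm]

theorem principalMinor_pair (M : Matrix ι ι R) {i j : ι} (hij : i ≠ j) :
    M.principalMinor {i, j} = M i i * M j j - M i j * M j i := by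
  let e : Fin 2 ≃ ({i, j} : Finset ι) :=
    { toFun := ![⟨i, by simp⟩, ⟨j, by simp⟩]
      invFun := fun x => if (x : ι) = i then 0 else 1
      left_inv := fun x => by fin_cases x <;> simp [hij.symm]
      right_inv := fun x => by
        obtain ⟨x, hx⟩ := x
        rcases Finset.mem_insert.mp hx with rfl | hx
        · simp
        · obtain rfl := Finset.mem_singleton.mp hx
          simp [hij.symm] }
  rw [principalMinor, ← det_submatrix_equiv_self e, det_fin_two]
  simp [e]

theorem sumPrincipalMinors_mul_diagonal [Fintype ι] (M : Matrix ι ι R) (b : ι → R) (k : ℕ) :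
    (M * diagonal b).sumPrincipalMinors k =
      ∑ s ∈ Finset.univ.powersetCard k, (∏ i ∈ s, b i) * M.principalMinor s := by
  simp only [sumPrincipalMinors, principalMinor_mul_diagonal]

theorem continuous_sumPrincipalMinors [Fintype ι] (k : ℕ) :
    Continuous fun M : Matrix ι ι ℝ => M.sumPrincipalMinors k :=
  continuous_finsetSum _ fun _ _ => (continuous_id.matrix_submatrix _ _).matrix_det

end Matrix

theorem eFromCharpoly_natCast (N : ℕ) (X : Matrix (Fin N) (Fin N) ℝ) (k : ℕ) :
    eFromCharpoly N X k = X.sumPrincipalMinors k := by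
  rw [eFromCharpoly, Matrix.sumPrincipalMinors]
  by_cases hk : k ≤ N
  · have := X.charpoly_coeff_eq_sum_minors k (by simpa using hk)
    rw [Fintype.card_fin] at this
    rw [if_pos ⟨by positivity, by exact_mod_cast hk⟩, Int.toNat_natCast, this, ← mul_assoc,
      ← mul_pow]
    simp [Matrix.principalMinor]
  · rw [if_neg (by omega), Finset.powersetCard_eq_empty.mpr (by simpa using hk), Finset.sum_empty]

theorem glChar_two_two (N : ℕ) (A : Matrix (Fin N) (Fin N) ℝ) :
    glChar N [2, 2] A =
      A.sumPrincipalMinors 2 ^ 2 - A.sumPrincipalMinors 1 * A.sumPrincipalMinors 3 := by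
  have hconj : glChar N [2, 2] A =
      (of fun i j : Fin 2 => eFromCharpoly N A ((([2, 2] : List ℕ).get i : ℤ) + j - i)).det := rfl
  rw [hconj, det_fin_two]
  simp only [of_apply, ← eFromCharpoly_natCast, Nat.cast_ofNat, Nat.cast_one]
  norm_num
  ring

theorem Finset.sum_sum_sq_mul_sub_mul {ι : Type*} [Fintype ι] (a b : ι → ℝ) :
    ∑ r, ∑ s, (a r * b s - b r * a s) ^ 2 =
      2 * ((∑ r, a r * a r) * (∑ r, b r * b r) - (∑ r, a r * b r) ^ 2) := by
  have h : ∀ r s, (a r * b s - b r * a s) ^ 2 =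
      a r * a r * (b s * b s) + b r * b r * (a s * a s) - 2 * ((a r * b r) * (a s * b s)) :=
    fun r s => by ring
  simp only [h, Finset.sum_add_distrib, Finset.sum_sub_distrib, ← Finset.mul_sum,
    ← Finset.sum_mul, sq (∑ r, a r * b r)]
  ring

theorem Finset.sum_powersetCard_two_univ {ι M : Type*} [Fintype ι] [LinearOrder ι]
    [AddCommMonoid M] (f : Finset ι → M) :
    ∑ s ∈ univ.powersetCard 2, f s =
      ∑ p ∈ univ.filter (fun p : ι × ι => p.1 < p.2), f {p.1, p.2} := by
  symm
  refine Finset.sum_bij (fun p _ => {p.1, p.2}) (fun p hp => ?_) (fun p hp q hq hpq => ?_)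
    (fun s hs => ?_) (fun _ _ => rfl)
  · simp only [mem_filter, mem_univ, true_and] at hp
    simp [mem_powersetCard, card_pair hp.ne]
  · simp only [mem_filter, mem_univ, true_and] at hp hq
    have h1 : p.1 ∈ ({q.1, q.2} : Finset ι) := hpq ▸ by simp
    have h2 : p.2 ∈ ({q.1, q.2} : Finset ι) := hpq ▸ by simp
    simp only [mem_insert, mem_singleton] at h1 h2
    ext <;> grind
  · obtain ⟨x, y, hxy, rfl⟩ := card_eq_two.mp (mem_powersetCard.mp hs).2
    rcases hxy.lt_or_gt with h | h
    · exact ⟨(x, y), by simpa using h, rfl⟩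
    · exact ⟨(y, x), by simpa using h, pair_comm y x⟩

namespace Matrix.orthogonalGroup

variable {ι : Type*} [Fintype ι] [DecidableEq ι]

def rowFlip (r : ι) : orthogonalGroup ι ℝ :=
  ⟨diagonal fun t => if t = r then -1 else 1, by
    rw [mem_orthogonalGroup_iff, diagonal_transpose, diagonal_mul_diagonal, ← diagonal_one]
    congr 1
    ext t
    split_ifs <;> simp⟩

def ofPerm (σ : Equiv.Perm ι) : orthogonalGroup ι ℝ :=
  ⟨σ.permMatrix ℝ, by
    rw [mem_orthogonalGroup_iff, transpose_permMatrix, ← permMatrix_mul, inv_mul_cancel,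
      permMatrix_one]⟩

theorem coe_rowFlip_mul (r : ι) (ψ : orthogonalGroup ι ℝ) :
    ((rowFlip r * ψ : orthogonalGroup ι ℝ) : Matrix ι ι ℝ) =
      diagonal (fun t => if t = r then -1 else 1) * (ψ : Matrix ι ι ℝ) :=
  rfl

theorem coe_ofPerm_mul_apply (σ : Equiv.Perm ι) (ψ : orthogonalGroup ι ℝ) (a c : ι) :
    ((ofPerm σ * ψ : orthogonalGroup ι ℝ) : Matrix ι ι ℝ) a c = (ψ : Matrix ι ι ℝ) (σ a) c := by
  show (σ.toPEquiv.toMatrix * (ψ : Matrix ι ι ℝ) : Matrix ι ι ℝ) a c = _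
  rw [PEquiv.toMatrix_toPEquiv_mul]
  rfl

theorem sum_col_mul_col (ψ : orthogonalGroup ι ℝ) (i j : ι) :
    ∑ r, (ψ : Matrix ι ι ℝ) r i * (ψ : Matrix ι ι ℝ) r j = if i = j then 1 else 0 := by
  have := congrFun (congrFun ((mem_orthogonalGroup_iff' ι ℝ).mp ψ.2) i) j
  simpa [mul_apply, one_apply] using this

instance : CompactSpace (orthogonalGroup ι ℝ) := by
  have hclosed : IsClosed (orthogonalGroup ι ℝ : Set (Matrix ι ι ℝ)) := isClosed_unitary
  exact isCompact_iff_compactSpace.mp <|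
    (isCompact_univ_pi fun _ => isCompact_univ_pi fun _ => isCompact_Icc).of_isClosed_subset
      hclosed fun U hU i _ j _ => abs_le.mp (by simpa using entry_norm_bound_of_unitary hU i j)

theorem continuous_coe_apply (r i : ι) :
    Continuous fun ψ : orthogonalGroup ι ℝ => (ψ : Matrix ι ι ℝ) r i :=
  (continuous_apply_apply r i).comp continuous_subtype_val

theorem continuous_principalMinor (s : Finset ι) :
    Continuous fun ψ : orthogonalGroup ι ℝ => (ψ : Matrix ι ι ℝ).principalMinor s :=
  (continuous_subtype_val.matrix_submatrix _ _).matrix_det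

variable [MeasurableSpace (orthogonalGroup ι ℝ)] [BorelSpace (orthogonalGroup ι ℝ)]
  {ν : Measure (orthogonalGroup ι ℝ)}

theorem integrable_of_continuous [IsFiniteMeasure ν] {f : orthogonalGroup ι ℝ → ℝ}
    (hf : Continuous f) : Integrable f ν :=
  hf.integrable_of_hasCompactSupport (.of_compactSpace f)

theorem integral_principalMinor_mul_principalMinor_of_ne [ν.IsMulLeftInvariant]
    {s t : Finset ι} (hst : s ≠ t) :
    ∫ ψ, (ψ : Matrix ι ι ℝ).principalMinor s * (ψ : Matrix ι ι ℝ).principalMinor t ∂ν = 0 := by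
  obtain ⟨r, hr⟩ := Finset.symmDiff_nonempty.mpr hst
  refine integral_eq_zero_of_mul_left_eq_neg (g := rowFlip r) fun ψ => ?_
  have hsign (u : Finset ι) :
      ∏ i ∈ u, (if i = r then (-1 : ℝ) else 1) = if r ∈ u then -1 else 1 :=
    Finset.prod_ite_eq' u r _
  rw [coe_rowFlip_mul, principalMinor_diagonal_mul, principalMinor_diagonal_mul, hsign, hsign]
  rcases Finset.mem_symmDiff.mp hr with ⟨hs, ht⟩ | ⟨ht, hs⟩ <;> simp [hs, ht]

theorem integral_sq_minor_eq [ν.IsMulLeftInvariant] {i j r s : ι} (hij : i ≠ j) (hrs : r ≠ s) :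
    ∫ ψ, ((ψ : Matrix ι ι ℝ) r i * (ψ : Matrix ι ι ℝ) s j
        - (ψ : Matrix ι ι ℝ) r j * (ψ : Matrix ι ι ℝ) s i) ^ 2 ∂ν =
      ∫ ψ, ((ψ : Matrix ι ι ℝ) i i * (ψ : Matrix ι ι ℝ) j j
        - (ψ : Matrix ι ι ℝ) i j * (ψ : Matrix ι ι ℝ) j i) ^ 2 ∂ν := by
  have hinj {a b : ι} (hab : a ≠ b) : Function.Injective ![a, b] := by
    intro x y
    fin_cases x <;> fin_cases y <;> simp [hab, hab.symm]
  obtain ⟨σ, hσ⟩ := Equiv.Perm.exists_extending_pair _ _ (hinj hij) (hinj hrs)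
  symm
  rw [← integral_mul_left_eq_self _ (ofPerm σ)]
  simp only [coe_ofPerm_mul_apply, show σ i = r from hσ 0, show σ j = s from hσ 1]

theorem integral_principalMinor_pair_sq [IsProbabilityMeasure ν] [ν.IsMulLeftInvariant]
    {i j : ι} (hij : i ≠ j) :
    ∫ ψ, (ψ : Matrix ι ι ℝ).principalMinor {i, j} ^ 2 ∂ν =
      2 / (Fintype.card ι * (Fintype.card ι - 1)) := by
  let minorSq (r s : ι) (ψ : orthogonalGroup ι ℝ) : ℝ :=
    ((ψ : Matrix ι ι ℝ) r i * (ψ : Matrix ι ι ℝ) s j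
      - (ψ : Matrix ι ι ℝ) r j * (ψ : Matrix ι ι ℝ) s i) ^ 2
  have hint (r s : ι) : Integrable (minorSq r s) ν := integrable_of_continuous <|
    (((continuous_coe_apply r i).mul (continuous_coe_apply s j)).sub
      ((continuous_coe_apply r j).mul (continuous_coe_apply s i))).pow 2
  set c := ∫ ψ, minorSq i j ψ ∂ν
  have hterm (r s : ι) : ∫ ψ, minorSq r s ψ ∂ν = c - if r = s then c else 0 := by
    by_cases hrs : r = s
    · subst hrs
      simp [minorSq, mul_comm]
    · rw [if_neg hrs, sub_zero]
      exact integral_sq_minor_eq hij hrs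
  have htotal : ∑ r, ∑ s, ∫ ψ, minorSq r s ψ ∂ν = 2 := by
    have hlagrange (ψ : orthogonalGroup ι ℝ) : ∑ r, ∑ s, minorSq r s ψ = 2 := by
      simp only [minorSq]
      rw [Finset.sum_sum_sq_mul_sub_mul (fun r => (ψ : Matrix ι ι ℝ) r i)
        fun r => (ψ : Matrix ι ι ℝ) r j]
      simp only [sum_col_mul_col, if_neg hij]
      norm_num
    simp_rw [← integral_finsetSum _ fun s _ => hint _ s]
    rw [← integral_finsetSum _ fun r _ => integrable_finsetSum _ fun s _ => hint r s]
    simp [hlagrange]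
  simp only [hterm, Finset.sum_sub_distrib, Finset.sum_const, Finset.sum_ite_eq, Finset.mem_univ,
    if_true, Finset.card_univ, nsmul_eq_mul] at htotal
  have hc : (Fintype.card ι * (Fintype.card ι - 1)) * c = 2 := by
    rw [← htotal]
    ring
  simp_rw [principalMinor_pair _ hij]
  rw [eq_div_iff fun h => by simp [h] at hc, mul_comm]
  exact hc

theorem integral_sumPrincipalMinors_mul [IsFiniteMeasure ν] (b : ι → ℝ) (k l : ℕ) :
    ∫ ψ, ((ψ : Matrix ι ι ℝ) * diagonal b).sumPrincipalMinors k
        * ((ψ : Matrix ι ι ℝ) * diagonal b).sumPrincipalMinors l ∂ν =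
      ∑ s ∈ Finset.univ.powersetCard k, ∑ t ∈ Finset.univ.powersetCard l,
        ((∏ i ∈ s, b i) * ∏ i ∈ t, b i) *
          ∫ ψ, (ψ : Matrix ι ι ℝ).principalMinor s * (ψ : Matrix ι ι ℝ).principalMinor t ∂ν := by
  have hint (s t : Finset ι) (c : ℝ) : Integrable (fun ψ : orthogonalGroup ι ℝ =>
      c * ((ψ : Matrix ι ι ℝ).principalMinor s * (ψ : Matrix ι ι ℝ).principalMinor t)) ν :=
    integrable_of_continuous <|
      continuous_const.mul ((continuous_principalMinor s).mul (continuous_principalMinor t))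
  simp_rw [sumPrincipalMinors_mul_diagonal, Finset.sum_mul_sum, mul_mul_mul_comm]
  rw [integral_finsetSum _ fun s _ => integrable_finsetSum _ fun t _ => hint s t _]
  refine Finset.sum_congr rfl fun s _ => ?_
  rw [integral_finsetSum _ fun t _ => hint s t _]
  simp_rw [integral_const_mul]

theorem integral_sumPrincipalMinors_mul_of_ne [IsFiniteMeasure ν] [ν.IsMulLeftInvariant]
    (b : ι → ℝ) {k l : ℕ} (hkl : k ≠ l) :
    ∫ ψ, ((ψ : Matrix ι ι ℝ) * diagonal b).sumPrincipalMinors k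
        * ((ψ : Matrix ι ι ℝ) * diagonal b).sumPrincipalMinors l ∂ν = 0 := by
  rw [integral_sumPrincipalMinors_mul]
  refine Finset.sum_eq_zero fun s hs => Finset.sum_eq_zero fun t ht => ?_
  have hst : s ≠ t := by
    rintro rfl
    exact hkl ((Finset.mem_powersetCard.mp hs).2.symm.trans (Finset.mem_powersetCard.mp ht).2)
  rw [integral_principalMinor_mul_principalMinor_of_ne hst, mul_zero]

theorem integral_sumPrincipalMinors_sq [IsFiniteMeasure ν] [ν.IsMulLeftInvariant]
    (b : ι → ℝ) (k : ℕ) :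
    ∫ ψ, ((ψ : Matrix ι ι ℝ) * diagonal b).sumPrincipalMinors k ^ 2 ∂ν =
      ∑ s ∈ Finset.univ.powersetCard k,
        (∏ i ∈ s, b i) ^ 2 * ∫ ψ, (ψ : Matrix ι ι ℝ).principalMinor s ^ 2 ∂ν := by
  simp_rw [sq, integral_sumPrincipalMinors_mul]
  refine Finset.sum_congr rfl fun s hs => ?_
  rw [Finset.sum_eq_single_of_mem s hs fun t _ hts => by
    rw [integral_principalMinor_mul_principalMinor_of_ne hts.symm, mul_zero]]

end Matrix.orthogonalGroup

open Matrix.orthogonalGroup in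
theorem integral_glChar_two_two_mul_diagonal {N : ℕ}
    [MeasurableSpace (orthogonalGroup (Fin N) ℝ)] [BorelSpace (orthogonalGroup (Fin N) ℝ)]
    (ν : Measure (orthogonalGroup (Fin N) ℝ)) [IsProbabilityMeasure ν] [ν.IsMulLeftInvariant]
    (b : Fin N → ℝ) :
    ∫ ψ, glChar N [2, 2] ((ψ : Matrix (Fin N) (Fin N) ℝ) * diagonal b) ∂ν =
      2 / (N * (N - 1)) * ∑ p ∈ Finset.univ.filter (fun p : Fin N × Fin N => p.1 < p.2),
        b p.1 ^ 2 * b p.2 ^ 2 := by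
  have hcont (k : ℕ) : Continuous fun ψ : orthogonalGroup (Fin N) ℝ =>
      ((ψ : Matrix (Fin N) (Fin N) ℝ) * diagonal b).sumPrincipalMinors k :=
    (continuous_sumPrincipalMinors k).comp (continuous_subtype_val.matrix_mul continuous_const)
  simp_rw [glChar_two_two]
  rw [integral_sub (integrable_of_continuous (by exact (hcont 2).pow 2))
      (integrable_of_continuous (by exact (hcont 1).mul (hcont 3))),
    integral_sumPrincipalMinors_sq, integral_sumPrincipalMinors_mul_of_ne _ (by norm_num),
    sub_zero, Finset.sum_powersetCard_two_univ, Finset.mul_sum]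
  refine Finset.sum_congr rfl fun p hp => ?_
  have hne : p.1 ≠ p.2 := (Finset.mem_filter.mp hp).2.ne
  rw [Finset.prod_pair hne, integral_principalMinor_pair_sq hne, Fintype.card_fin]
  ring

theorem spherical_coefficient_two_two_general
    (b : Fin 4 → ℝ)
    [MeasurableSpace (Matrix.orthogonalGroup (Fin 4) ℝ)]
    [BorelSpace (Matrix.orthogonalGroup (Fin 4) ℝ)]
    (ν : Measure (Matrix.orthogonalGroup (Fin 4) ℝ)) [IsProbabilityMeasure ν]
    (hinv : ∀ U : Matrix.orthogonalGroup (Fin 4) ℝ, ν.map (fun V => U * V) = ν) :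
    ∫ ψ : Matrix.orthogonalGroup (Fin 4) ℝ,
        glChar 4 [2, 2] ((ψ : Matrix (Fin 4) (Fin 4) ℝ) * Matrix.diagonal b) ∂ν
      = (∑ p ∈ Finset.univ.filter (fun p : Fin 4 × Fin 4 => p.1 < p.2),
          (b p.1) ^ 2 * (b p.2) ^ 2) / 6 := by
  have : ν.IsMulLeftInvariant := ⟨hinv⟩
  rw [integral_glChar_two_two_mul_diagonal ν b]
  norm_num
  ring

/-- for `B = diag(b₁,b₂,b₃,b₄) ∈ GL_4(ℝ)` and the representation
`ρ_{(2,2)}` of `GL_4(ℝ)`, the diagonal matrix coefficient of `ρ_{(2,2)}(B)` at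
the normalized `O(4)`-fixed (spherical) vector — which equals the spherical
function `F_{(2,2)}(B) = ∫_{O(4)} tr ρ_{(2,2)}(ψ B) dψ` with respect to the
normalized Haar (= left-invariant probability) measure — equals
`(Σ_{1 ≤ i < j ≤ 4} b_i² b_j²) / 6`. -/
theorem spherical_coefficient_two_two
    (b : Fin 4 → ℝ) (hb : ∀ i, b i ≠ 0)
    [MeasurableSpace (Matrix.orthogonalGroup (Fin 4) ℝ)]
    [BorelSpace (Matrix.orthogonalGroup (Fin 4) ℝ)]
    (ν : Measure (Matrix.orthogonalGroup (Fin 4) ℝ)) [IsProbabilityMeasure ν]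
    (hinv : ∀ U : Matrix.orthogonalGroup (Fin 4) ℝ, ν.map (fun V => U * V) = ν) :
    ∫ ψ : Matrix.orthogonalGroup (Fin 4) ℝ,
        glChar 4 [2, 2] ((ψ : Matrix (Fin 4) (Fin 4) ℝ) * Matrix.diagonal b) ∂ν
      = (∑ p ∈ Finset.univ.filter (fun p : Fin 4 × Fin 4 => p.1 < p.2),
          (b p.1) ^ 2 * (b p.2) ^ 2) / 6 :=
  spherical_coefficient_two_two_general b ν hinv
end

section
/- Let A ∈ GL_n(ℝ) and fix a k-dimensional subspace g of ℝ^n together with U₀ ∈ O(n) such that U₀ A g = g. Write B₁ = π_g ∘ (U₀A)|_g and B₂ = π_{g⊥} ∘ (U₀A)|_{g⊥}. Then ∫ det(Id − D L_{V U₀ A}(g)) dV, integrated over V ∈ O(g) × O(g⊥) with normalized Haar measure, equals ∫_{O(k)} ∫_{O(n−k)} det(Id − (ψ₂ B₂) ⊗ ᵀ(ψ₁ B₁)⁻¹) dψ₂ dψ₁, where D L_B(g) is the derivative at g of the action of B on the Grassmannian in the Hom(g,g⊥)-chart, given by φ̇ ↦ (π_{g⊥} B|_{g⊥}) φ̇ (π_g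 B|_g)⁻¹. -/
/-!
Fix `V = (ψ₁, ψ₂)`. In the orthonormal bases `e₁` of `g` and `e₂` of `g⊥`, `Hom(g, g⊥)` becomes
the space of `(n - k) × k` matrices, and the defining relation `L X ∘ ψ₁B₁ = ψ₂B₂ ∘ X` says
that `L` is `X ↦ (ψ₂B₂) X (ψ₁B₁)⁻¹` there; this is possible because `B₁` is invertible, `U₀A`
being injective with `U₀A g = g`. In the standard basis of matrices the map `X ↦ M X N` has
the Kronecker matrix `M ⊗ₖ Nᵀ`, so the two integrands agree pointwise.
-/

open Matrix MeasureTheory Submodule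

noncomputable section

variable {n : ℕ}

/-- `π_g ∘ T|_h : h → g` for a linear map `T` of `ℝⁿ` and subspaces `g, h`. -/
def projRestrict (T : EuclideanSpace ℝ (Fin n) →ₗ[ℝ] EuclideanSpace ℝ (Fin n))
    (g h : Submodule ℝ (EuclideanSpace ℝ (Fin n))) : h →ₗ[ℝ] g :=
  (orthogonalProjection g).toLinearMap ∘ₗ T ∘ₗ h.subtype

/-- The endomorphism of a subspace `g ⊆ ℝⁿ` induced by an orthogonal `k × k`
matrix `ψ` through a linear isometry `e : ℝᵏ ≅ g` (an orthonormal basis). -/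
def orthAct {k : ℕ} (g : Submodule ℝ (EuclideanSpace ℝ (Fin n)))
    (e : EuclideanSpace ℝ (Fin k) ≃ₗᵢ[ℝ] g)
    (ψ : Matrix.orthogonalGroup (Fin k) ℝ) : g →ₗ[ℝ] g :=
  e.toLinearEquiv.toLinearMap ∘ₗ
    Matrix.toEuclideanLin (ψ : Matrix (Fin k) (Fin k) ℝ) ∘ₗ
      e.symm.toLinearEquiv.toLinearMap

open scoped Kronecker

section Kronecker

variable {R : Type*} [CommRing R] {m p : Type*} [Fintype m] [Fintype p] [DecidableEq m]
  [DecidableEq p]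

theorem Matrix.toMatrix_mulLeftLinearMap_comp_mulRightLinearMap
    (M : Matrix m m R) (N : Matrix p p R) :
    LinearMap.toMatrix (stdBasis R m p) (stdBasis R m p)
        (mulLeftLinearMap p R M ∘ₗ mulRightLinearMap m R N) = M ⊗ₖ Nᵀ := by
  ext ⟨i, j⟩ ⟨i', j'⟩
  rw [LinearMap.toMatrix_apply, stdBasis_eq_single]
  simp [stdBasis, mul_apply, single, ite_and, mul_comm]

end Kronecker

section Conjugation

variable {R : Type*} [CommRing R] {ι κ V W : Type*} [Fintype ι] [Fintype κ] [DecidableEq ι]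
  [DecidableEq κ] [AddCommGroup V] [Module R V] [AddCommGroup W] [Module R W]
  (b₁ : Module.Basis ι R V) (b₂ : Module.Basis κ R W)

theorem LinearMap.toMatrix_eq_mul_mul_inv_of_comp_eq {P : V →ₗ[R] V} (hP : IsUnit P)
    {Q : W →ₗ[R] W} {X Y : V →ₗ[R] W} (h : Y ∘ₗ P = Q ∘ₗ X) :
    toMatrix b₁ b₂ Y = toMatrix b₂ b₂ Q * toMatrix b₁ b₂ X * (toMatrix b₁ b₁ P)⁻¹ := by
  have hPm : IsUnit (toMatrix b₁ b₁ P).det :=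
    (Matrix.isUnit_iff_isUnit_det _).1 ((isUnit_toMatrix_iff b₁).2 hP)
  rw [← toMatrix_comp b₁ b₂ b₂, ← h, toMatrix_comp b₁ b₁ b₂,
    Matrix.mul_nonsing_inv_cancel_right _ _ hPm]

theorem LinearMap.det_id_sub_eq_det_one_sub_kronecker (L : (V →ₗ[R] W) →ₗ[R] V →ₗ[R] W)
    {P : V →ₗ[R] V} (hP : IsUnit P) {Q : W →ₗ[R] W} (hL : ∀ X, L X ∘ₗ P = Q ∘ₗ X) :
    LinearMap.det (LinearMap.id - L)
      = (1 - toMatrix b₂ b₂ Q ⊗ₖ ((toMatrix b₁ b₁ P)⁻¹)ᵀ).det := by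
  set F := mulLeftLinearMap ι R (toMatrix b₂ b₂ Q) ∘ₗ
    mulRightLinearMap κ R (toMatrix b₁ b₁ P)⁻¹
  have hconj : LinearMap.id - L = ((toMatrix b₁ b₂).symm : _ →ₗ[R] _) ∘ₗ
      (LinearMap.id - F) ∘ₗ ((toMatrix b₁ b₂).symm.symm : _ →ₗ[R] _) := by
    ext X : 1
    simp [F, ← Matrix.mul_assoc, ← toMatrix_eq_mul_mul_inv_of_comp_eq b₁ b₂ hP (hL X)]
  rw [hconj, det_conj, ← det_toMatrix (Matrix.stdBasis R κ ι), map_sub, toMatrix_id,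
    Matrix.toMatrix_mulLeftLinearMap_comp_mulRightLinearMap]

end Conjugation

theorem LinearMap.toMatrix_orthonormalBasis_apply {𝕜 E F ι κ : Type*} [RCLike 𝕜]
    [NormedAddCommGroup E] [InnerProductSpace 𝕜 E] [NormedAddCommGroup F]
    [InnerProductSpace 𝕜 F] [Fintype ι] [DecidableEq ι] [Fintype κ]
    (b₁ : OrthonormalBasis ι 𝕜 E) (b₂ : OrthonormalBasis κ 𝕜 F) (S : E →ₗ[𝕜] F) (i : κ) (j : ι) :
    toMatrix b₁.toBasis b₂.toBasis S i j = inner 𝕜 (b₂ i) (S (b₁ j)) := by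
  rw [toMatrix_apply, OrthonormalBasis.coe_toBasis_repr_apply, OrthonormalBasis.repr_apply_apply,
    OrthonormalBasis.coe_toBasis]

theorem toMatrix_orthAct {k : ℕ} (g : Submodule ℝ (EuclideanSpace ℝ (Fin n)))
    (e : EuclideanSpace ℝ (Fin k) ≃ₗᵢ[ℝ] g) (ψ : Matrix.orthogonalGroup (Fin k) ℝ) :
    LinearMap.toMatrix ((EuclideanSpace.basisFun (Fin k) ℝ).map e).toBasis
      ((EuclideanSpace.basisFun (Fin k) ℝ).map e).toBasis (orthAct g e ψ) = ψ := by
  rw [OrthonormalBasis.toBasis_map, LinearMap.toMatrix_map_left, LinearMap.toMatrix_map_right]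
  convert LinearMap.toMatrix_toLin _ _ (ψ : Matrix (Fin k) (Fin k) ℝ)
  ext x : 1
  simp [orthAct, toEuclideanLin_eq_toLin_orthonormal]

theorem isUnit_orthAct {k : ℕ} (g : Submodule ℝ (EuclideanSpace ℝ (Fin n)))
    (e : EuclideanSpace ℝ (Fin k) ≃ₗᵢ[ℝ] g) (ψ : Matrix.orthogonalGroup (Fin k) ℝ) :
    IsUnit (orthAct g e ψ) := by
  rw [← LinearMap.isUnit_toMatrix_iff ((EuclideanSpace.basisFun (Fin k) ℝ).map e).toBasis,
    toMatrix_orthAct]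
  exact Unitary.isUnit_coe

theorem projRestrict_self_eq_restrict
    {T : EuclideanSpace ℝ (Fin n) →ₗ[ℝ] EuclideanSpace ℝ (Fin n)}
    {g : Submodule ℝ (EuclideanSpace ℝ (Fin n))} (hT : ∀ x ∈ g, T x ∈ g) :
    projRestrict T g g = T.restrict hT := by
  ext x : 2
  exact Submodule.starProjection_eq_self_iff.2 (hT x x.2)

theorem isUnit_projRestrict_self
    {T : EuclideanSpace ℝ (Fin n) →ₗ[ℝ] EuclideanSpace ℝ (Fin n)} (hT : Function.Injective T)
    {g : Submodule ℝ (EuclideanSpace ℝ (Fin n))}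
    (hgT : ∀ x ∈ g, T x ∈ g) : IsUnit (projRestrict T g g) := by
  rw [projRestrict_self_eq_restrict hgT, LinearMap.isUnit_iff_ker_eq_bot, LinearMap.ker_eq_bot]
  exact fun x y hxy => Subtype.ext (hT (congrArg Subtype.val hxy))

theorem integral_det_derivative_eq_integral_det_kronecker_general
    (k : ℕ)
    (A : Matrix (Fin n) (Fin n) ℝ) (hA : IsUnit A.det)
    (U₀ : Matrix.orthogonalGroup (Fin n) ℝ)
    (g : Submodule ℝ (EuclideanSpace ℝ (Fin n)))
    (hg : Submodule.map (Matrix.toEuclideanLin ((U₀ : Matrix (Fin n) (Fin n) ℝ) * A)) g = g)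
    (e₁ : EuclideanSpace ℝ (Fin k) ≃ₗᵢ[ℝ] g)
    (e₂ : EuclideanSpace ℝ (Fin (n - k)) ≃ₗᵢ[ℝ]
      (gᗮ : Submodule ℝ (EuclideanSpace ℝ (Fin n))))
    -- the matrices of `B₁` and `B₂` in the orthonormal bases `e₁`, `e₂`:
    (B₁m : Matrix (Fin k) (Fin k) ℝ)
    (hB₁m : ∀ i j, B₁m i j = inner (𝕜 := ℝ)
      (e₁ (EuclideanSpace.single i 1))
      (projRestrict (Matrix.toEuclideanLin ((U₀ : Matrix (Fin n) (Fin n) ℝ) * A)) g g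
        (e₁ (EuclideanSpace.single j 1))))
    (B₂m : Matrix (Fin (n - k)) (Fin (n - k)) ℝ)
    (hB₂m : ∀ i j, B₂m i j = inner (𝕜 := ℝ)
      (e₂ (EuclideanSpace.single i 1))
      (projRestrict (Matrix.toEuclideanLin ((U₀ : Matrix (Fin n) (Fin n) ℝ) * A)) gᗮ gᗮ
        (e₂ (EuclideanSpace.single j 1))))
    -- `L ψ₁ ψ₂` is the derivative `D L_{V U₀ A}(g)` for `V = (ψ₁, ψ₂) ∈ O(g) × O(g⊥)`:
    (L : Matrix.orthogonalGroup (Fin k) ℝ → Matrix.orthogonalGroup (Fin (n - k)) ℝ →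
      ((g →ₗ[ℝ] (gᗮ : Submodule ℝ (EuclideanSpace ℝ (Fin n)))) →ₗ[ℝ]
        (g →ₗ[ℝ] (gᗮ : Submodule ℝ (EuclideanSpace ℝ (Fin n))))))
    (hL : ∀ ψ₁ ψ₂ X,
      (L ψ₁ ψ₂ X) ∘ₗ (orthAct g e₁ ψ₁ ∘ₗ
          projRestrict (Matrix.toEuclideanLin ((U₀ : Matrix (Fin n) (Fin n) ℝ) * A)) g g)
        = (orthAct gᗮ e₂ ψ₂ ∘ₗ
            projRestrict (Matrix.toEuclideanLin ((U₀ : Matrix (Fin n) (Fin n) ℝ) * A)) gᗮ gᗮ)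
          ∘ₗ X)
    [MeasurableSpace (Matrix.orthogonalGroup (Fin k) ℝ)]
    (ν₁ : Measure (Matrix.orthogonalGroup (Fin k) ℝ))
    [MeasurableSpace (Matrix.orthogonalGroup (Fin (n - k)) ℝ)]
    (ν₂ : Measure (Matrix.orthogonalGroup (Fin (n - k)) ℝ)) :
    (∫ ψ₁ : Matrix.orthogonalGroup (Fin k) ℝ,
        ∫ ψ₂ : Matrix.orthogonalGroup (Fin (n - k)) ℝ,
          LinearMap.det (LinearMap.id - L ψ₁ ψ₂) ∂ν₂ ∂ν₁)
      = ∫ ψ₁ : Matrix.orthogonalGroup (Fin k) ℝ,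
          ∫ ψ₂ : Matrix.orthogonalGroup (Fin (n - k)) ℝ,
            ((1 : Matrix ((Fin (n - k)) × Fin k) ((Fin (n - k)) × Fin k) ℝ)
              - Matrix.kroneckerMap (· * ·)
                  ((ψ₂ : Matrix (Fin (n - k)) (Fin (n - k)) ℝ) * B₂m)
                  ((((ψ₁ : Matrix (Fin k) (Fin k) ℝ) * B₁m)⁻¹)ᵀ)).det ∂ν₂ ∂ν₁ := by
  set T := Matrix.toEuclideanLin ((U₀ : Matrix (Fin n) (Fin n) ℝ) * A)
  have hT : Function.Injective T := by
    have hM : IsUnit ((U₀ : Matrix (Fin n) (Fin n) ℝ) * A) :=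
      Unitary.isUnit_coe.mul ((Matrix.isUnit_iff_isUnit_det A).2 hA)
    exact ((Module.End.isUnit_iff T).1
      ((Matrix.isUnit_toLin_iff (EuclideanSpace.basisFun (Fin n) ℝ).toBasis).2 hM)).1
  have hgT : ∀ x ∈ g, T x ∈ g := fun x hx => hg ▸ Submodule.mem_map_of_mem hx
  set b₁ := (EuclideanSpace.basisFun (Fin k) ℝ).map e₁
  set b₂ := (EuclideanSpace.basisFun (Fin (n - k)) ℝ).map e₂
  have hB₁ : LinearMap.toMatrix b₁.toBasis b₁.toBasis (projRestrict T g g) = B₁m := by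
    ext i j
    rw [LinearMap.toMatrix_orthonormalBasis_apply, hB₁m]
    simp only [b₁, OrthonormalBasis.map_apply, EuclideanSpace.basisFun_apply]
  have hB₂ : LinearMap.toMatrix b₂.toBasis b₂.toBasis (projRestrict T gᗮ gᗮ) = B₂m := by
    ext i j
    rw [LinearMap.toMatrix_orthonormalBasis_apply, hB₂m]
    simp only [b₂, OrthonormalBasis.map_apply, EuclideanSpace.basisFun_apply]
  refine integral_congr_ae (ae_of_all _ fun ψ₁ => integral_congr_ae (ae_of_all _ fun ψ₂ => ?_))
  beta_reduce
  have hP : IsUnit (orthAct g e₁ ψ₁ ∘ₗ projRestrict T g g) :=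
    (isUnit_orthAct g e₁ ψ₁).mul (isUnit_projRestrict_self hT hgT)
  rw [LinearMap.det_id_sub_eq_det_one_sub_kronecker b₁.toBasis b₂.toBasis (L ψ₁ ψ₂) hP (hL ψ₁ ψ₂),
    LinearMap.toMatrix_comp _ b₁.toBasis, LinearMap.toMatrix_comp _ b₂.toBasis,
    toMatrix_orthAct, toMatrix_orthAct, hB₁, hB₂]

/-- with `B₁ = π_g ∘ (U₀A)|_g`, `B₂ = π_{g⊥} ∘ (U₀A)|_{g⊥}` (where
`U₀ ∈ O(n)`, `U₀ A g = g`), the integral over `V ∈ O(g) × O(g⊥)` (normalized Haar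
measures) of `det (Id - D L_{V U₀ A}(g))` — where `D L_B(g) : φ̇ ↦
(π_{g⊥} B|_{g⊥}) φ̇ (π_g B|_g)⁻¹` is the derivative of the Grassmannian action in
the `Hom(g, g⊥)` chart — equals
`∫_{O(k)} ∫_{O(n-k)} det (Id - (ψ₂ B₂) ⊗ ᵀ(ψ₁ B₁)⁻¹) dψ₂ dψ₁`, where `B₁, B₂`
are expressed as matrices in orthonormal bases of `g, g⊥` and `M ⊗ ᵀN` is the
Kronecker-product endomorphism `X ↦ M X N⁻¹`. -/
theorem integral_det_derivative_eq_integral_det_kronecker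
    (k : ℕ) (hkn : k ≤ n)
    (A : Matrix (Fin n) (Fin n) ℝ) (hA : IsUnit A.det)
    (U₀ : Matrix.orthogonalGroup (Fin n) ℝ)
    (g : Submodule ℝ (EuclideanSpace ℝ (Fin n)))
    (hg : Submodule.map (Matrix.toEuclideanLin ((U₀ : Matrix (Fin n) (Fin n) ℝ) * A)) g = g)
    (hgk : Module.finrank ℝ g = k)
    (e₁ : EuclideanSpace ℝ (Fin k) ≃ₗᵢ[ℝ] g)
    (e₂ : EuclideanSpace ℝ (Fin (n - k)) ≃ₗᵢ[ℝ]
      (gᗮ : Submodule ℝ (EuclideanSpace ℝ (Fin n))))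
    -- the matrices of `B₁` and `B₂` in the orthonormal bases `e₁`, `e₂`:
    (B₁m : Matrix (Fin k) (Fin k) ℝ)
    (hB₁m : ∀ i j, B₁m i j = inner (𝕜 := ℝ)
      (e₁ (EuclideanSpace.single i 1))
      (projRestrict (Matrix.toEuclideanLin ((U₀ : Matrix (Fin n) (Fin n) ℝ) * A)) g g
        (e₁ (EuclideanSpace.single j 1))))
    (B₂m : Matrix (Fin (n - k)) (Fin (n - k)) ℝ)
    (hB₂m : ∀ i j, B₂m i j = inner (𝕜 := ℝ)
      (e₂ (EuclideanSpace.single i 1))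
      (projRestrict (Matrix.toEuclideanLin ((U₀ : Matrix (Fin n) (Fin n) ℝ) * A)) gᗮ gᗮ
        (e₂ (EuclideanSpace.single j 1))))
    -- `L ψ₁ ψ₂` is the derivative `D L_{V U₀ A}(g)` for `V = (ψ₁, ψ₂) ∈ O(g) × O(g⊥)`:
    (L : Matrix.orthogonalGroup (Fin k) ℝ → Matrix.orthogonalGroup (Fin (n - k)) ℝ →
      ((g →ₗ[ℝ] (gᗮ : Submodule ℝ (EuclideanSpace ℝ (Fin n)))) →ₗ[ℝ]
        (g →ₗ[ℝ] (gᗮ : Submodule ℝ (EuclideanSpace ℝ (Fin n))))))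
    (hL : ∀ ψ₁ ψ₂ X,
      (L ψ₁ ψ₂ X) ∘ₗ (orthAct g e₁ ψ₁ ∘ₗ
          projRestrict (Matrix.toEuclideanLin ((U₀ : Matrix (Fin n) (Fin n) ℝ) * A)) g g)
        = (orthAct gᗮ e₂ ψ₂ ∘ₗ
            projRestrict (Matrix.toEuclideanLin ((U₀ : Matrix (Fin n) (Fin n) ℝ) * A)) gᗮ gᗮ)
          ∘ₗ X)
    -- normalized Haar measures on `O(k)` and `O(n-k)`:
    [MeasurableSpace (Matrix.orthogonalGroup (Fin k) ℝ)]
    [BorelSpace (Matrix.orthogonalGroup (Fin k) ℝ)]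
    (ν₁ : Measure (Matrix.orthogonalGroup (Fin k) ℝ)) [IsProbabilityMeasure ν₁]
    (hinv₁ : ∀ U : Matrix.orthogonalGroup (Fin k) ℝ, ν₁.map (fun V => U * V) = ν₁)
    [MeasurableSpace (Matrix.orthogonalGroup (Fin (n - k)) ℝ)]
    [BorelSpace (Matrix.orthogonalGroup (Fin (n - k)) ℝ)]
    (ν₂ : Measure (Matrix.orthogonalGroup (Fin (n - k)) ℝ)) [IsProbabilityMeasure ν₂]
    (hinv₂ : ∀ U : Matrix.orthogonalGroup (Fin (n - k)) ℝ, ν₂.map (fun V => U * V) = ν₂) :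
    (∫ ψ₁ : Matrix.orthogonalGroup (Fin k) ℝ,
        ∫ ψ₂ : Matrix.orthogonalGroup (Fin (n - k)) ℝ,
          LinearMap.det (LinearMap.id - L ψ₁ ψ₂) ∂ν₂ ∂ν₁)
      = ∫ ψ₁ : Matrix.orthogonalGroup (Fin k) ℝ,
          ∫ ψ₂ : Matrix.orthogonalGroup (Fin (n - k)) ℝ,
            ((1 : Matrix ((Fin (n - k)) × Fin k) ((Fin (n - k)) × Fin k) ℝ)
              - Matrix.kroneckerMap (· * ·)
                  ((ψ₂ : Matrix (Fin (n - k)) (Fin (n - k)) ℝ) * B₂m)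
                  ((((ψ₁ : Matrix (Fin k) (Fin k) ℝ) * B₁m)⁻¹)ᵀ)).det ∂ν₂ ∂ν₁ :=
  integral_det_derivative_eq_integral_det_kronecker_general k A hA U₀ g hg e₁ e₂ B₁m hB₁m B₂m hB₂m L
    hL ν₁ ν₂

end
end
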